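/- Let A be a finite-dimensional involutory Hopf algebra over ℂ with n = dim_ℂ A, let Λ ∈ A be the cotrace element, and let A_op : A⊗A⊗A⊗A → A⊗A⊗A⊗A be the star operator A_op(x₁ ⊗ x₂ ⊗ x₃ ⊗ x₄) = ∑ Λ₍₁₎x₁ ⊗ Λ₍₂₎x₂ ⊗ Λ₍₃₎x₃ ⊗ Λ₍₄₎x₄, where ∑ Λ₍₁₎ ⊗ Λ₍₂₎ ⊗ Λ₍₃₎ ⊗ Λ₍₄₎ = (Δ ⊗ id ⊗ id)((Δ ⊗ id)(Δ Λ)). Then for every integer k ≥ 1, A_opᵏ = n^{k−1}·A_op; in particular A_op ∘ A_op = n·A_op. -/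

import Mathlib

/-!
For a functional `f`, `f Λ` is the trace of the hit action `x ↦ ∑ x₁ f(x₂)`. The Hopf identity
`x₁ ⊗ a x₂ = ∑ S(a₁)(a₂ x)₁ ⊗ (a₂ x)₂`, cyclicity of the trace and `∑ a₂ S(a₁) = ε(a) 1` (which
needs `S² = id`) give `a Λ = ε(a) Λ`, while `ε(Λ) = tr(id) = n`. Hence `Λ² = n Λ`; the iterated
coproduct is an algebra map, so `∑ Λ₍₁₎ ⊗ Λ₍₂₎ ⊗ Λ₍₃₎ ⊗ Λ₍₄₎` squares to `n` times itself, and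
left multiplication by it is `n` times an idempotent.
-/

open HopfAlgebra TensorProduct

noncomputable section

variable (A : Type*) [Ring A] [HopfAlgebra ℂ A]

/-- The fourfold tensor product A⊗A⊗A⊗A (an algebra). -/
abbrev T4 := A ⊗[ℂ] (A ⊗[ℂ] (A ⊗[ℂ] A))

/-- The cotrace element `Λ = ∑ᵢ (eⁱ ⊗ id)(Δ eᵢ)` associated to a basis `b`. -/
def cotraceElem {ι : Type*} [Fintype ι] (b : Module.Basis ι ℂ A) : A :=
  ∑ i, (TensorProduct.lid ℂ A)
    ((LinearMap.rTensor A (b.coord i)) (Coalgebra.comul (R := ℂ) (b i)))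

/-- The threefold comultiplication ∑ Λ₍₁₎ ⊗ Λ₍₂₎ ⊗ Λ₍₃₎ ⊗ Λ₍₄₎ of the cotrace element. -/
def cotraceLegs {ι : Type*} [Fintype ι] (b : Module.Basis ι ℂ A) : T4 A :=
  (LinearMap.lTensor A (LinearMap.lTensor A (Coalgebra.comul (R := ℂ))))
    ((LinearMap.lTensor A (Coalgebra.comul (R := ℂ)))
      (Coalgebra.comul (R := ℂ) (cotraceElem A b)))

/-- The star operator: componentwise left multiplication by
∑ Λ₍₁₎ ⊗ Λ₍₂₎ ⊗ Λ₍₃₎ ⊗ Λ₍₄₎. -/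
def starOp {ι : Type*} [Fintype ι] (b : Module.Basis ι ℂ A) : T4 A →ₗ[ℂ] T4 A :=
  LinearMap.mulLeft ℂ (cotraceLegs A b)

open Finset
open Coalgebra (comul counit Repr)
open scoped Coalgebra

theorem Module.Dual.apply_lid_rTensor {R M : Type*} [CommSemiring R] [AddCommMonoid M]
    [Module R M] (f g : Module.Dual R M) (t : M ⊗[R] M) :
    f (TensorProduct.lid R M (g.rTensor M t)) = g (TensorProduct.rid R M (f.lTensor M t)) := by
  induction t with
  | zero => simp
  | tmul x y => simp [mul_comm]
  | add x y hx hy => simp only [map_add, hx, hy]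

theorem rid_lTensor_tmul_mul {R H : Type*} [CommSemiring R] [Semiring H] [Algebra R H]
    (f : Module.Dual R H) (c d : H) (t : H ⊗[R] H) :
    TensorProduct.rid R H (f.lTensor H ((c ⊗ₜ d) * t)) =
      c * TensorProduct.rid R H ((f ∘ₗ LinearMap.mulLeft R d).lTensor H t) := by
  induction t with
  | zero => simp
  | tmul x y => simp [Algebra.TensorProduct.tmul_mul_tmul]
  | add x y hx hy => simp only [mul_add, map_add, hx, hy]

section Coalgebra

variable {R C : Type*} [CommSemiring R] [AddCommMonoid C] [Module R C] [Coalgebra R C]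

/-- Sweedler's hit action `f ⇀ x = ∑ x₁ f(x₂)`. -/
def Coalgebra.hit (f : Module.Dual R C) : Module.End R C :=
  (_root_.TensorProduct.rid R C).toLinearMap ∘ₗ f.lTensor C ∘ₗ comul

theorem Coalgebra.hit_counit : hit (counit : Module.Dual R C) = 1 := by
  ext x
  simp [hit]

end Coalgebra

section Hopf

variable {R H : Type*} [CommSemiring R] [Semiring H] [HopfAlgebra R H]

theorem HopfAlgebra.sum_antipode_tmul_one_mul_comul {κ : Type*} {a : H} (r : Repr R a κ) :
    ∑ i ∈ r.index, (antipode R (r.left i) ⊗ₜ[R] (1 : H)) * comul (r.right i) = 1 ⊗ₜ a := by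
  -- both sides are `∑ S(a₁) a₂ ⊗ a₃`, bracketed in the two ways allowed by coassociativity
  let N : H ⊗[R] (H ⊗[R] H) →ₗ[R] H ⊗[R] H :=
    (LinearMap.mul' R H).rTensor H ∘ₗ (TensorProduct.assoc R H H H).symm.toLinearMap
  have h := congrArg N (Coalgebra.sum_map_tmul_tmul_eq (antipode R) LinearMap.id LinearMap.id a
    (repr := r) (a₁ := fun i => ℛ R (r.left i)) (a₂ := fun i => ℛ R (r.right i)))
  simp only [N, map_sum, LinearMap.comp_apply, LinearEquiv.coe_coe, assoc_symm_tmul,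
    LinearMap.rTensor_tmul, LinearMap.mul'_apply, LinearMap.id_apply] at h
  simp only [← sum_tmul, sum_antipode_mul_eq_smul, smul_tmul, ← tmul_sum,
    Coalgebra.sum_counit_smul] at h
  simpa only [← (ℛ R _).eq, mul_sum, Algebra.TensorProduct.tmul_mul_tmul, one_mul] using h

theorem HopfAlgebra.one_tmul_mul_comul {κ : Type*} {a : H} (r : Repr R a κ) (x : H) :
    ((1 : H) ⊗ₜ[R] a) * comul x =
      ∑ i ∈ r.index, (antipode R (r.left i) ⊗ₜ[R] (1 : H)) * comul (r.right i * x) := by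
  simp only [Bialgebra.comul_mul, ← mul_assoc, ← sum_mul, sum_antipode_tmul_one_mul_comul]

theorem HopfAlgebra.sum_right_mul_antipode_left (hinv : ∀ a : H, antipode R (antipode R a) = a)
    {κ : Type*} {a : H} (r : Repr R a κ) :
    ∑ i ∈ r.index, r.right i * antipode R (r.left i) = counit (R := R) a • 1 := by
  calc ∑ i ∈ r.index, r.right i * antipode R (r.left i)
      = antipode R (∑ i ∈ r.index, r.left i * antipode R (r.right i)) := by
        simp only [map_sum, antipode_mul_antidistrib, hinv]
    _ = counit (R := R) a • 1 := by rw [sum_mul_antipode_eq_smul, map_smul, antipode_one]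

theorem HopfAlgebra.hit_comp_mulLeft {κ : Type*} {a : H} (r : Repr R a κ) (f : Module.Dual R H) :
    Coalgebra.hit (f ∘ₗ LinearMap.mulLeft R a) =
      ∑ i ∈ r.index, Algebra.lmul R H (antipode R (r.left i)) * Coalgebra.hit f *
        Algebra.lmul R H (r.right i) := by
  ext x
  have h := rid_lTensor_tmul_mul f 1 a (comul x)
  rw [one_mul] at h
  simp only [Coalgebra.hit, LinearMap.comp_apply, LinearEquiv.coe_coe, ← h, one_tmul_mul_comul r,
    map_sum, rid_lTensor_tmul_mul, LinearMap.mulLeft_one, LinearMap.comp_id,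
    LinearMap.sum_apply, Module.End.mul_apply, Algebra.coe_lmul_eq_mul, LinearMap.mul_apply']

end Hopf

section Cotrace

variable {A} {ι : Type*} [Fintype ι] (b : Module.Basis ι ℂ A)

theorem apply_cotraceElem (f : Module.Dual ℂ A) :
    f (cotraceElem A b) = LinearMap.trace ℂ A (Coalgebra.hit f) := by
  classical
  simp [LinearMap.trace_eq_matrix_trace ℂ b, Matrix.trace, LinearMap.toMatrix_apply, cotraceElem,
    Module.Dual.apply_lid_rTensor, Coalgebra.hit]

theorem mul_cotraceElem (hinv : ∀ a : A, antipode ℂ (antipode ℂ a) = a) (a : A) :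
    a * cotraceElem A b = counit (R := ℂ) a • cotraceElem A b := by
  refine sub_eq_zero.mp ((Module.forall_dual_apply_eq_zero_iff ℂ _).mp fun f => ?_)
  let r := ℛ ℂ a
  calc f (a * cotraceElem A b - counit a • cotraceElem A b)
      = LinearMap.trace ℂ A (Coalgebra.hit (f ∘ₗ LinearMap.mulLeft ℂ a)) -
          counit a * LinearMap.trace ℂ A (Coalgebra.hit f) := by
        rw [← apply_cotraceElem b, ← apply_cotraceElem b, LinearMap.comp_apply,
          LinearMap.mulLeft_apply, map_sub, map_smul, smul_eq_mul]
    _ = LinearMap.trace ℂ A (Coalgebra.hit f *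
          Algebra.lmul ℂ A (∑ i ∈ r.index, r.right i * antipode ℂ (r.left i))) -
          counit a * LinearMap.trace ℂ A (Coalgebra.hit f) := by
        simp only [hit_comp_mulLeft r, map_sum, mul_sum, map_mul, mul_assoc,
          LinearMap.trace_mul_comm _ (Algebra.lmul ℂ A _)]
    _ = 0 := by
        rw [sum_right_mul_antipode_left hinv r, map_smul, map_one, mul_smul_comm, mul_one,
          map_smul, smul_eq_mul, sub_self]

theorem counit_cotraceElem : counit (R := ℂ) (cotraceElem A b) = Module.finrank ℂ A := by
  have := Module.Finite.of_basis b
  rw [apply_cotraceElem b, Coalgebra.hit_counit, LinearMap.trace_one]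

theorem cotraceElem_mul_self (hinv : ∀ a : A, antipode ℂ (antipode ℂ a) = a) :
    cotraceElem A b * cotraceElem A b = (Module.finrank ℂ A : ℂ) • cotraceElem A b := by
  rw [mul_cotraceElem b hinv, counit_cotraceElem]

theorem cotraceLegs_mul_self (hinv : ∀ a : A, antipode ℂ (antipode ℂ a) = a) :
    cotraceLegs A b * cotraceLegs A b = (Module.finrank ℂ A : ℂ) • cotraceLegs A b := by
  let Δ : A →ₐ[ℂ] A ⊗[ℂ] A := Bialgebra.comulAlgHom ℂ A
  let comulAlgHom₃ : A →ₐ[ℂ] T4 A :=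
    (Algebra.TensorProduct.lTensor A (Algebra.TensorProduct.lTensor A Δ)).comp
      ((Algebra.TensorProduct.lTensor A Δ).comp Δ)
  have h : cotraceLegs A b = comulAlgHom₃ (cotraceElem A b) := rfl
  rw [h, ← map_mul, cotraceElem_mul_self b hinv, map_smul]

theorem starOp_comp_self (hinv : ∀ a : A, antipode ℂ (antipode ℂ a) = a) :
    starOp A b ∘ₗ starOp A b = (Module.finrank ℂ A : ℂ) • starOp A b := by
  refine LinearMap.ext fun x => ?_
  simp only [starOp, LinearMap.comp_apply, LinearMap.mulLeft_apply, LinearMap.smul_apply]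
  rw [← mul_assoc (cotraceLegs A b), cotraceLegs_mul_self b hinv, smul_mul_assoc]

end Cotrace

theorem pow_succ_eq_smul_of_mul_self_eq_smul {M S : Type*} [Monoid M] [Monoid S]
    [MulAction S M] [IsScalarTower S M M] {x : M} {c : S} (h : x * x = c • x) (k : ℕ) :
    x ^ (k + 1) = c ^ k • x := by
  induction k with
  | zero => simp
  | succ k ih => rw [pow_succ, ih, smul_mul_assoc, h, smul_smul, ← pow_succ]

theorem starOp_pow_general (A : Type*) [Ring A] [HopfAlgebra ℂ A]
    (hinv : ∀ a : A, antipode (R := ℂ) (antipode (R := ℂ) a) = a)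
    {ι : Type*} [Fintype ι] (b : Module.Basis ι ℂ A) :
    (∀ k : ℕ, 1 ≤ k →
      (starOp A b : Module.End ℂ (T4 A)) ^ k =
        ((Module.finrank ℂ A : ℂ) ^ (k - 1)) • starOp A b) ∧
    starOp A b ∘ₗ starOp A b = (Module.finrank ℂ A : ℂ) • starOp A b := by
  have hsq := starOp_comp_self b hinv
  refine ⟨fun k hk => ?_, hsq⟩
  obtain ⟨k, rfl⟩ := Nat.exists_eq_add_of_le' hk
  rw [Nat.add_sub_cancel]
  exact pow_succ_eq_smul_of_mul_self_eq_smul (M := Module.End ℂ (T4 A)) hsq k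

theorem starOp_pow (A : Type*) [Ring A] [HopfAlgebra ℂ A] [FiniteDimensional ℂ A]
    (hinv : ∀ a : A, antipode (R := ℂ) (antipode (R := ℂ) a) = a)
    {ι : Type*} [Fintype ι] (b : Module.Basis ι ℂ A) :
    (∀ k : ℕ, 1 ≤ k →
      (starOp A b : Module.End ℂ (T4 A)) ^ k =
        ((Module.finrank ℂ A : ℂ) ^ (k - 1)) • starOp A b) ∧
    starOp A b ∘ₗ starOp A b = (Module.finrank ℂ A : ℂ) • starOp A b :=
  starOp_pow_general A hinv b

end
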